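/- Define H(α, β) = sin α + (β − α) cos α − sin β and, for r ∈ (0,1), 𝒦_r(u) = 2r²(1 − r⁴) sin u / (1 − 2r² cos u + r⁴)². Let Γ : [0,2π] → [0,2π] be a nondecreasing function with Γ(π) ≤ π such that ∫₀^{2π} 𝒦_r(α) · H(α, Γ(α)) dα = 0 for some r ∈ (0,1). Then Γ(α) = α for all α ∈ [0,2π]. -/
import Mathlib


/-- The tangent-line defect of the sine function. -/
noncomputable def Hfun (α β : ℝ) : ℝ :=
  Real.sin α + (β - α) * Real.cos α - Real.sin β

/-- The kernel `𝒦_r`. -/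
noncomputable def kerK (r u : ℝ) : ℝ :=
  2 * r ^ 2 * (1 - r ^ 4) * Real.sin u / (1 - 2 * r ^ 2 * Real.cos u + r ^ 4) ^ 2

open Real Set MeasureTheory intervalIntegral

/-- Tangent line of sine lies strictly above sine on `[0, π]` away from tangency. -/
lemma Hfun_pos {a b : ℝ} (ha : a ∈ Set.Icc 0 π) (hb : b ∈ Set.Icc 0 π) (hne : b ≠ a) :
    0 < Hfun a b := by
  rcases hne.lt_or_gt with h | h
  · -- b < a
    obtain ⟨c, hc, hc'⟩ := exists_hasDerivAt_eq_slope Real.sin Real.cos h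
      Real.continuousOn_sin (fun x _ => Real.hasDerivAt_sin x)
    have hab : (0:ℝ) < a - b := by linarith
    have hs : Real.sin a - Real.sin b = (a - b) * Real.cos c := by
      rw [eq_div_iff hab.ne'] at hc'
      linear_combination (-1 : ℝ) * hc'
    have hcc : Real.cos a < Real.cos c :=
      Real.strictAntiOn_cos ⟨hb.1.trans hc.1.le, hc.2.le.trans ha.2⟩ ha hc.2
    have : Hfun a b = (a - b) * (Real.cos c - Real.cos a) := by
      unfold Hfun; linarith [hs]
    rw [this]
    exact mul_pos hab (by linarith)
  · -- a < b
    obtain ⟨c, hc, hc'⟩ := exists_hasDerivAt_eq_slope Real.sin Real.cos h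
      Real.continuousOn_sin (fun x _ => Real.hasDerivAt_sin x)
    have hab : (0:ℝ) < b - a := by linarith
    have hs : Real.sin b - Real.sin a = (b - a) * Real.cos c := by
      rw [eq_div_iff hab.ne'] at hc'
      linear_combination (-1 : ℝ) * hc'
    have hcc : Real.cos c < Real.cos a :=
      Real.strictAntiOn_cos ha ⟨ha.1.trans hc.1.le, hc.2.le.trans hb.2⟩ hc.1
    have : Hfun a b = (b - a) * (Real.cos a - Real.cos c) := by
      unfold Hfun; linarith [hs]
    rw [this]
    exact mul_pos hab (by linarith)

lemma Hfun_self (a : ℝ) : Hfun a a = 0 := by unfold Hfun; ring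

lemma Hfun_nonneg {a b : ℝ} (ha : a ∈ Set.Icc 0 π) (hb : b ∈ Set.Icc 0 π) :
    0 ≤ Hfun a b := by
  rcases eq_or_ne b a with rfl | hne
  · rw [Hfun_self]
  · exact (Hfun_pos ha hb hne).le

/-- Mean value comparison: the slope of sine on a subinterval of `[0, a]` is at least `cos a`. -/
lemma sin_slope {u v a : ℝ} (hu : 0 ≤ u) (huv : u ≤ v) (hva : v ≤ a) (ha : a ≤ π) :
    (v - u) * Real.cos a ≤ Real.sin v - Real.sin u := by
  rcases eq_or_lt_of_le huv with rfl | h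
  · simp
  · obtain ⟨c, hc, hc'⟩ := exists_hasDerivAt_eq_slope Real.sin Real.cos h
      Real.continuousOn_sin (fun x _ => Real.hasDerivAt_sin x)
    have hab : (0:ℝ) < v - u := by linarith
    have hs : Real.sin v - Real.sin u = (v - u) * Real.cos c := by
      rw [eq_div_iff hab.ne'] at hc'
      linear_combination (-1 : ℝ) * hc'
    have hcc : Real.cos a ≤ Real.cos c :=
      Real.cos_le_cos_of_nonneg_of_le_pi (by linarith [hc.1]) ha (by linarith [hc.2])
    rw [hs]
    exact mul_le_mul_of_nonneg_left hcc hab.le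

/-- On `[π, 2π - a]` the function `Hfun a ·` stays above `Hfun a π`. -/
lemma Hfun_ge_of_mem_upper {a γ : ℝ} (ha : a ∈ Set.Icc 0 π) (h1 : π ≤ γ) (h2 : γ ≤ 2*π - a) :
    Hfun a π ≤ Hfun a γ := by
  set s := γ - π with hs
  have hs0 : 0 ≤ s := by rw [hs]; linarith
  have hsle : s ≤ π - a := by rw [hs]; linarith
  have hsle' : s ≤ π := by linarith [ha.1]
  have hsin : Real.sin γ = - Real.sin s := by
    have hγ : γ = π + s := by rw [hs]; ring
    rw [hγ, Real.sin_add]; simp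
  have key1 : 0 ≤ Real.sin s - s * Real.cos s := by
    have h := Hfun_nonneg (a := s) (b := 0) ⟨hs0, hsle'⟩ ⟨le_refl 0, Real.pi_pos.le⟩
    unfold Hfun at h
    rw [Real.sin_zero] at h
    linarith
  have key2 : -Real.cos a ≤ Real.cos s := by
    have := Real.cos_le_cos_of_nonneg_of_le_pi hs0 (by linarith [ha.1] : π - a ≤ π) hsle
    rw [Real.cos_pi_sub] at this
    linarith
  have key3 : 0 ≤ s * Real.cos a + Real.sin s := by
    nlinarith [mul_le_mul_of_nonneg_left key2 hs0]
  have hfin : Hfun a γ - Hfun a π = s * Real.cos a + Real.sin s := by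
    unfold Hfun
    rw [hsin, Real.sin_pi, hs]
    ring
  linarith

lemma sin_refl (x : ℝ) : Real.sin (2*π - x) = - Real.sin x := by
  rw [Real.sin_sub, Real.sin_two_pi, Real.cos_two_pi]; ring

lemma cos_refl (x : ℝ) : Real.cos (2*π - x) = Real.cos x := by
  rw [Real.cos_sub, Real.sin_two_pi, Real.cos_two_pi]; ring

/-- Case of a reflected point beyond `2π - a`. -/
lemma Hfun_case3 {a b₁ γ : ℝ} (ha : a ∈ Set.Icc 0 π) (hb : 0 ≤ b₁)
    (hγ1 : 2*π - a ≤ γ) (hγ2 : γ ≤ 2*π) (hbγ : b₁ ≤ 2*π - γ) :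
    2 * Hfun a π ≤ Hfun a b₁ + Hfun a γ := by
  set x := 2*π - γ with hx
  have hx0 : 0 ≤ x := by rw [hx]; linarith
  have hxa : x ≤ a := by rw [hx]; linarith
  have hbx : b₁ ≤ x := hbγ
  have hγeq : γ = 2*π - x := by rw [hx]; ring
  have hslope : (x - b₁) * Real.cos a ≤ Real.sin x - Real.sin b₁ :=
    sin_slope hb hbx hxa ha.2
  rw [hγeq]
  unfold Hfun
  rw [sin_refl, Real.sin_pi]
  linarith

/-- The key pointwise inequality with its equality case. -/
lemma key_ineq {a b₁ b₂ : ℝ} (ha : a ∈ Set.Ioo 0 π) (hb₁ : b₁ ∈ Set.Icc 0 π)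
    (hb₂ : b₂ ∈ Set.Icc b₁ (2*π)) :
    0 ≤ Hfun a b₁ + Hfun a (2*π - b₂) ∧
      (Hfun a b₁ + Hfun a (2*π - b₂) = 0 → b₁ = a ∧ b₂ = 2*π - a) := by
  have haI : a ∈ Set.Icc 0 π := ⟨ha.1.le, ha.2.le⟩
  have hπI : π ∈ Set.Icc 0 π := ⟨Real.pi_pos.le, le_refl _⟩
  have hb₂0 : 0 ≤ b₂ := hb₁.1.trans hb₂.1
  set γ := 2*π - b₂ with hγ
  have hγ0 : 0 ≤ γ := by rw [hγ]; linarith [hb₂.2]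
  have hπa : Hfun a π > 0 := Hfun_pos haI hπI (ne_of_gt ha.2)
  rcases le_or_gt γ π with hc1 | hc1
  · -- both in [0, π]
    have h1 := Hfun_nonneg haI hb₁
    have h2 := Hfun_nonneg haI ⟨hγ0, hc1⟩
    refine ⟨by linarith, fun h0 => ?_⟩
    have e1 : Hfun a b₁ = 0 := by linarith
    have e2 : Hfun a γ = 0 := by linarith
    have hb1a : b₁ = a := by
      by_contra hne
      exact absurd e1 (ne_of_gt (Hfun_pos haI hb₁ hne))
    have hγa : γ = a := by
      by_contra hne
      exact absurd e2 (ne_of_gt (Hfun_pos haI ⟨hγ0, hc1⟩ hne))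
    exact ⟨hb1a, by rw [hγ] at hγa; linarith⟩
  · rcases le_or_gt γ (2*π - a) with hc2 | hc2
    · -- middle case : strict positivity
      have h1 := Hfun_nonneg haI hb₁
      have h2 : Hfun a π ≤ Hfun a γ := Hfun_ge_of_mem_upper haI hc1.le hc2
      exact ⟨by linarith, fun h0 => absurd h0 (ne_of_gt (by linarith))⟩
    · -- far case
      have h3 : 2 * Hfun a π ≤ Hfun a b₁ + Hfun a γ :=
        Hfun_case3 haI hb₁.1 hc2.le (by rw [hγ]; linarith [hb₂0]) (by rw [hγ]; linarith [hb₂.1])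
      exact ⟨by linarith, fun h0 => absurd h0 (ne_of_gt (by linarith))⟩

theorem equality_case_forces_identity
    (Γ : ℝ → ℝ)
    (hmono : MonotoneOn Γ (Set.Icc 0 (2 * Real.pi)))
    (hmaps : Set.MapsTo Γ (Set.Icc 0 (2 * Real.pi)) (Set.Icc 0 (2 * Real.pi)))
    (hπ : Γ Real.pi ≤ Real.pi)
    (r : ℝ) (hr0 : 0 < r) (hr1 : r < 1)
    (heq : ∫ α in (0 : ℝ)..(2 * Real.pi), kerK r α * Hfun α (Γ α) = 0) :
    ∀ α ∈ Set.Icc (0 : ℝ) (2 * Real.pi), Γ α = α := by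
  have pi_pos := Real.pi_pos
  have hr2 : r ^ 2 < 1 := by nlinarith
  have hr4 : r ^ 4 < 1 := by nlinarith
  have hden : ∀ u : ℝ, (1 - r^2)^2 ≤ 1 - 2 * r ^ 2 * Real.cos u + r ^ 4 := by
    intro u
    nlinarith [Real.cos_le_one u, sq_nonneg r]
  have hdpos : (0:ℝ) < (1 - r^2)^2 := pow_pos (by linarith : (0:ℝ) < 1 - r^2) 2
  have hdenpos : ∀ u : ℝ, (0:ℝ) < 1 - 2 * r ^ 2 * Real.cos u + r ^ 4 := by
    intro u; linarith [hden u]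
  have hkerK_pos : ∀ u ∈ Set.Ioo (0:ℝ) π, 0 < kerK r u := by
    intro u hu
    unfold kerK
    apply div_pos
    · have hsin := Real.sin_pos_of_pos_of_lt_pi hu.1 hu.2
      have h14 : (0:ℝ) < 1 - r^4 := by linarith
      positivity
    · exact pow_pos (hdenpos u) 2
  have hkerK_bd : ∀ u : ℝ, |kerK r u| ≤ 2 / ((1 - r^2)^2)^2 := by
    intro u
    unfold kerK
    rw [abs_div, abs_of_pos (pow_pos (hdenpos u) 2)]
    apply div_le_div₀ (by positivity)
    · have h1 : |Real.sin u| ≤ 1 := Real.abs_sin_le_one u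
      have h2 : (0:ℝ) ≤ 2 * r ^ 2 * (1 - r ^ 4) := by nlinarith
      rw [abs_mul, abs_of_nonneg h2]
      nlinarith [abs_nonneg (Real.sin u)]
    · positivity
    · exact pow_le_pow_left₀ hdpos.le (hden u) 2
  -- clamped version of Γ
  set G : ℝ → ℝ := fun x => Γ (max 0 (min x (2*π))) with hGdef
  have hpmem : ∀ x : ℝ, max 0 (min x (2*π)) ∈ Set.Icc 0 (2*π) := by
    intro x
    constructor
    · exact le_max_left _ _
    · exact max_le (by linarith) (min_le_right _ _)
  have hGmono : Monotone G := by
    intro x y hxy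
    exact hmono (hpmem x) (hpmem y) (max_le_max (le_refl 0) (min_le_min_right _ hxy))
  have hGeq : ∀ x ∈ Set.Icc (0:ℝ) (2*π), G x = Γ x := by
    intro x hx
    rw [hGdef]
    simp only [min_eq_left hx.2, max_eq_right hx.1]
  have hGmem : ∀ x : ℝ, G x ∈ Set.Icc (0:ℝ) (2*π) := fun x => hmaps (hpmem x)
  set g : ℝ → ℝ := fun x => kerK r x * Hfun x (G x) with hgdef
  have hGmeas : Measurable G := hGmono.measurable
  have hkerKc : Continuous (fun x => kerK r x) := by
    unfold kerK
    exact (continuous_const.mul Real.continuous_sin).div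
      ((continuous_const.sub (continuous_const.mul Real.continuous_cos)).add continuous_const |>.pow 2)
      (fun x => ne_of_gt (pow_pos (hdenpos x) 2))
  have hgmeas : Measurable g := by
    apply (hkerKc.measurable).mul
    unfold Hfun
    exact ((Real.measurable_sin.add
      (((hGmeas.sub measurable_id).mul Real.measurable_cos))).sub
      (Real.measurable_sin.comp hGmeas))
  -- bound for Hfun on the square
  have hHbd : ∀ x b : ℝ, x ∈ Set.Icc (0:ℝ) (2*π) → b ∈ Set.Icc (0:ℝ) (2*π) →
      |Hfun x b| ≤ 2 + 2*π := by
    intro x b hx hb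
    have h1 : |Real.sin x| ≤ 1 := Real.abs_sin_le_one x
    have h2 : |Real.cos x| ≤ 1 := Real.abs_cos_le_one x
    have h3 : |Real.sin b| ≤ 1 := Real.abs_sin_le_one b
    have h4 : |b - x| ≤ 2*π := by
      rw [abs_le]; constructor <;> [linarith [hb.1, hx.2]; linarith [hb.2, hx.1]]
    have h5 : |(b - x) * Real.cos x| ≤ 2*π := by
      rw [abs_mul]
      calc |b - x| * |Real.cos x| ≤ (2*π) * 1 :=
            mul_le_mul h4 h2 (abs_nonneg _) (by linarith)
        _ = 2*π := by ring
    calc |Hfun x b| = |Real.sin x + (b - x) * Real.cos x + -Real.sin b| := by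
          unfold Hfun; ring_nf
      _ ≤ |Real.sin x| + |(b - x) * Real.cos x| + |-Real.sin b| := abs_add_three _ _ _
      _ ≤ 1 + 2*π + 1 := by rw [abs_neg]; exact add_le_add (add_le_add h1 h5) h3
      _ = 2 + 2*π := by ring
  set Cg : ℝ := (2 / ((1 - r^2)^2)^2) * (2 + 2*π) with hCg
  have hgbd : ∀ x ∈ Set.Icc (0:ℝ) (2*π), |g x| ≤ Cg := by
    intro x hx
    show |kerK r x * Hfun x (G x)| ≤ Cg
    rw [abs_mul]
    exact mul_le_mul (hkerK_bd x) (hHbd x (G x) hx (hGmem x)) (abs_nonneg _) (by positivity)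
  -- integrability tool
  have hIntTool : ∀ (f : ℝ → ℝ), Measurable f → ∀ (a b C : ℝ),
      (∀ x ∈ Set.uIoc a b, |f x| ≤ C) → IntervalIntegrable f volume a b := by
    intro f hf a b C hC
    rw [intervalIntegrable_iff]
    refine ⟨hf.aestronglyMeasurable.restrict, ?_⟩
    apply HasFiniteIntegral.restrict_of_bounded (C := C) measure_Ioc_lt_top
    rw [ae_restrict_iff' measurableSet_Ioc]
    exact ae_of_all _ (fun x hx => by rw [Real.norm_eq_abs]; exact hC x hx)
  have hsub1 : Set.uIoc (0:ℝ) π ⊆ Set.Icc (0:ℝ) (2*π) := by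
    rw [Set.uIoc_of_le pi_pos.le]
    intro x hx
    exact ⟨hx.1.le, by linarith [hx.2]⟩
  have hsub2 : Set.uIoc π (2*π) ⊆ Set.Icc (0:ℝ) (2*π) := by
    rw [Set.uIoc_of_le (by linarith)]
    intro x hx
    exact ⟨by linarith [hx.1], hx.2⟩
  have int1 : IntervalIntegrable g volume 0 π :=
    hIntTool g hgmeas 0 π Cg (fun x hx => hgbd x (hsub1 hx))
  have int2 : IntervalIntegrable g volume π (2*π) :=
    hIntTool g hgmeas π (2*π) Cg (fun x hx => hgbd x (hsub2 hx))
  have hg2meas : Measurable (fun x => g (2*π - x)) :=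
    hgmeas.comp (measurable_const.sub measurable_id)
  have int3 : IntervalIntegrable (fun x => g (2*π - x)) volume 0 π := by
    apply hIntTool _ hg2meas 0 π Cg
    intro x hx
    have hx' := hsub1 hx
    exact hgbd (2*π - x) ⟨by linarith [hx'.2], by linarith [hx'.1]⟩
  -- the integral of g vanishes
  have heq' : ∫ x in (0:ℝ)..(2*π), g x = 0 := by
    have hcong : (∫ x in (0:ℝ)..(2*π), g x)
        = ∫ x in (0:ℝ)..(2*π), kerK r x * Hfun x (Γ x) := by
      apply intervalIntegral.integral_congr
      intro x hx
      rw [Set.uIcc_of_le (by linarith)] at hx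
      show kerK r x * Hfun x (G x) = kerK r x * Hfun x (Γ x)
      rw [hGeq x hx]
    rw [hcong]
    exact heq
  have hsub : ∫ x in (0:ℝ)..π, g (2*π - x) = ∫ x in π..(2*π), g x := by
    have h := intervalIntegral.integral_comp_sub_left (a := (0:ℝ)) (b := π) g (2*π)
    rw [show 2*π - π = π by ring, sub_zero] at h
    exact h
  have hJzero : ∫ x in (0:ℝ)..π, (g x + g (2*π - x)) = 0 := by
    rw [intervalIntegral.integral_add int1 int3, hsub,
      intervalIntegral.integral_add_adjacent_intervals int1 int2, heq']
  -- pointwise analysis of J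
  have hJkey : ∀ x ∈ Set.Ioo (0:ℝ) π, 0 ≤ g x + g (2*π - x) ∧
      (g x + g (2*π - x) = 0 → Γ x = x ∧ Γ (2*π - x) = 2*π - x) := by
    intro x hx
    have hxI : x ∈ Set.Icc (0:ℝ) (2*π) := ⟨hx.1.le, by linarith [hx.2]⟩
    have hx2I : 2*π - x ∈ Set.Icc (0:ℝ) (2*π) := ⟨by linarith [hx.2], by linarith [hx.1]⟩
    have hπI : π ∈ Set.Icc (0:ℝ) (2*π) := ⟨pi_pos.le, by linarith⟩
    have hb₁ : Γ x ∈ Set.Icc (0:ℝ) π :=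
      ⟨(hmaps hxI).1, (hmono hxI hπI hx.2.le).trans hπ⟩
    have hb₂ : Γ (2*π - x) ∈ Set.Icc (Γ x) (2*π) :=
      ⟨hmono hxI hx2I (by linarith [hx.2]), (hmaps hx2I).2⟩
    have hGx : G x = Γ x := hGeq x hxI
    have hGx2 : G (2*π - x) = Γ (2*π - x) := hGeq _ hx2I
    have hker_refl : kerK r (2*π - x) = - kerK r x := by
      unfold kerK
      rw [sin_refl, cos_refl]
      ring
    have hH_refl : Hfun (2*π - x) (Γ (2*π - x)) = - Hfun x (2*π - Γ (2*π - x)) := by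
      unfold Hfun
      rw [sin_refl, cos_refl, sin_refl]
      ring
    have hg2 : g (2*π - x) = kerK r x * Hfun x (2*π - Γ (2*π - x)) := by
      show kerK r (2*π - x) * Hfun (2*π - x) (G (2*π - x))
        = kerK r x * Hfun x (2*π - Γ (2*π - x))
      rw [hGx2, hker_refl, hH_refl]
      ring
    have hgx : g x = kerK r x * Hfun x (Γ x) := by
      show kerK r x * Hfun x (G x) = kerK r x * Hfun x (Γ x)
      rw [hGx]
    have hsum : g x + g (2*π - x)
        = kerK r x * (Hfun x (Γ x) + Hfun x (2*π - Γ (2*π - x))) := by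
      rw [hgx, hg2]; ring
    obtain ⟨hnn, heqc⟩ := key_ineq hx hb₁ hb₂
    have hkpos := hkerK_pos x hx
    constructor
    · rw [hsum]; exact mul_nonneg hkpos.le hnn
    · intro h0
      rw [hsum] at h0
      rcases mul_eq_zero.1 h0 with h | h
      · exact absurd h (ne_of_gt hkpos)
      · obtain ⟨e1, e2⟩ := heqc h
        exact ⟨e1, by linarith⟩
  have hJnn : ∀ x ∈ Set.Ioc (0:ℝ) π, 0 ≤ g x + g (2*π - x) := by
    intro x hx
    rcases lt_or_eq_of_le hx.2 with h | h
    · exact (hJkey x ⟨hx.1, h⟩).1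
    · have hkπ : kerK r π = 0 := by
        unfold kerK
        rw [Real.sin_pi]
        simp
      rw [h, show 2*π - π = π by ring]
      show (0:ℝ) ≤ kerK r π * Hfun π (G π) + kerK r π * Hfun π (G π)
      rw [hkπ]
      simp
  -- a.e. vanishing
  have hJint : IntegrableOn (fun x => g x + g (2*π - x)) (Set.Ioc 0 π) volume := by
    have := (int1.add int3)
    rw [intervalIntegrable_iff, Set.uIoc_of_le pi_pos.le] at this
    exact this
  have hIoc0 : ∫ x in Set.Ioc (0:ℝ) π, (g x + g (2*π - x)) = 0 := by
    rw [← intervalIntegral.integral_of_le pi_pos.le]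
    exact hJzero
  have hae0 : ∀ᵐ x ∂(volume.restrict (Set.Ioc (0:ℝ) π)), g x + g (2*π - x) = 0 := by
    have hnnae : 0 ≤ᵐ[volume.restrict (Set.Ioc (0:ℝ) π)] fun x => g x + g (2*π - x) := by
      rw [Filter.EventuallyLE, ae_restrict_iff' measurableSet_Ioc]
      exact ae_of_all _ (fun x hx => hJnn x hx)
    have := (MeasureTheory.integral_eq_zero_iff_of_nonneg_ae hnnae hJint).1 hIoc0
    filter_upwards [this] with x hx using hx
  have hae1 : ∀ᵐ x, x ∈ Set.Ioc (0:ℝ) π → g x + g (2*π - x) = 0 :=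
    (ae_restrict_iff' measurableSet_Ioc).1 hae0
  have hae2 : ∀ᵐ x : ℝ, x ∈ Set.Ioo (0:ℝ) π → (Γ x = x ∧ Γ (2*π - x) = 2*π - x) := by
    filter_upwards [hae1] with x hx hx'
    exact (hJkey x hx').2 (hx ⟨hx'.1, hx'.2.le⟩)
  set N : Set ℝ := {x | ¬ (x ∈ Set.Ioo (0:ℝ) π → (Γ x = x ∧ Γ (2*π - x) = 2*π - x))}
    with hNdef
  have hN : volume N = 0 := by
    rw [← MeasureTheory.ae_iff] at *
    exact hae2
  have hN' : volume ((fun x : ℝ => 2*π - x) ⁻¹' N) = 0 :=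
    (Measure.measurePreserving_sub_left volume (2*π)).quasiMeasurePreserving.preimage_null hN
  set B : Set ℝ := N ∪ (fun x : ℝ => 2*π - x) ⁻¹' N ∪ {π} with hBdef
  have hB : volume B = 0 := by
    rw [hBdef]
    exact measure_union_null (measure_union_null hN hN') Real.volume_singleton
  have hTid : ∀ t ∈ Set.Ioo (0:ℝ) (2*π), t ∉ B → Γ t = t := by
    intro t ht htB
    rw [hBdef] at htB
    simp only [Set.mem_union, Set.mem_preimage, Set.mem_singleton_iff, not_or] at htB
    obtain ⟨⟨ht1, ht2⟩, ht3⟩ := htB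
    rcases lt_trichotomy t π with h | h | h
    · have := of_not_not ht1
      exact (this ⟨ht.1, h⟩).1
    · exact absurd h ht3
    · have hs : (2*π - t) ∈ Set.Ioo (0:ℝ) π := ⟨by linarith [ht.2], by linarith⟩
      have := of_not_not ht2
      have h2 := (this hs).2
      rw [show 2*π - (2*π - t) = t by ring] at h2
      exact h2
  -- conclude
  intro α hα
  by_contra hne
  rcases lt_or_gt_of_ne hne with h | h
  · -- Γ α < α
    have hΓα := hmaps hα
    have hss : Set.Ioo (Γ α) α ⊆ B := by
      intro t ht
      by_contra htB
      have ht2π : t ∈ Set.Ioo (0:ℝ) (2*π) :=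
        ⟨lt_of_le_of_lt hΓα.1 ht.1, lt_of_lt_of_le ht.2 hα.2⟩
      have hid := hTid t ht2π htB
      have hle : Γ t ≤ Γ α := hmono ⟨ht2π.1.le, ht2π.2.le⟩ hα ht.2.le
      rw [hid] at hle
      exact absurd hle (not_le.2 ht.1)
    have hv : volume (Set.Ioo (Γ α) α) = 0 := measure_mono_null hss hB
    rw [Real.volume_Ioo, ENNReal.ofReal_eq_zero] at hv
    linarith
  · -- α < Γ α
    have hΓα := hmaps hα
    have hss : Set.Ioo α (Γ α) ⊆ B := by
      intro t ht
      by_contra htB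
      have ht2π : t ∈ Set.Ioo (0:ℝ) (2*π) :=
        ⟨lt_of_le_of_lt hα.1 ht.1, lt_of_lt_of_le ht.2 hΓα.2⟩
      have hid := hTid t ht2π htB
      have hle : Γ α ≤ Γ t := hmono hα ⟨ht2π.1.le, ht2π.2.le⟩ ht.1.le
      rw [hid] at hle
      exact absurd hle (not_le.2 ht.2)
    have hv : volume (Set.Ioo α (Γ α)) = 0 := measure_mono_null hss hB
    rw [Real.volume_Ioo, ENNReal.ofReal_eq_zero] at hv
    linarith
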